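/- Let L/k be an extension of finite fields, n ≥ 2, and g ∈ SL_n(L) an element normalizing SL_n(k). Then g^n ∈ SL_n(k). -/

import Mathlib

/-!
Conjugating the transvection `1 + E_ij` (`i ≠ j`) by `g` gives `1 + (g e_i)(e_jᵀ g⁻¹)`, so every
product `g_ai (g⁻¹)_jb` with `i ≠ j` lies in `k`; expanding `1 = (g⁻¹ g)_jj` for some `j ≠ i`
gives the same for `i = j`. Hence `ν • g` is defined over `k` for any nonzero entry `ν` of `g⁻¹`,
and since `ν ^ n = det (ν • g) ∈ k`, so is `g ^ n = ν⁻ⁿ • (ν • g) ^ n`.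
-/

namespace Matrix

section Subring

variable {n R : Type*} [Fintype n] [DecidableEq n] [CommRing R]

theorem mul_transvection_mul_eq_add_vecMulVec {G H : Matrix n n R} (hGH : G * H = 1) (i j : n) :
    G * transvection i j 1 * H = 1 + vecMulVec (G.col i) (H.row j) := by
  rw [transvection, mul_add, add_mul, mul_one, hGH, single_eq_single_vecMulVec_single,
    mul_vecMulVec, vecMulVec_mul, mulVec_single_one, single_one_vecMul]

theorem mul_diag_mem_of_mul_offDiag_mem {S : Subring R} {G H : Matrix n n R} (hHG : H * G = 1)
    (hS : ∀ i j, i ≠ j → ∀ a b, G a i * H j b ∈ S) {i j : n} (hij : i ≠ j) (a b : n) :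
    G a i * H i b ∈ S := by
  have : G a i * H i b = ∑ c, (G a i * H j c) * (G c j * H i b) := by
    calc G a i * H i b = G a i * H i b * (H * G) j j := by simp [hHG]
      _ = _ := by
        rw [Matrix.mul_apply, Finset.mul_sum]
        exact Finset.sum_congr rfl fun _ _ => by ring
  rw [this]
  exact S.sum_mem fun c _ => mul_mem (hS i j hij a c) (hS j i hij.symm c b)

end Subring

section RangeMap

variable {n k L : Type*} [Fintype n] [DecidableEq n]

theorem mem_range_mapMatrix_iff [Ring k] [Ring L] (f : k →+* L)
    {A : Matrix n n L} : A ∈ f.mapMatrix.range ↔ ∀ i j, A i j ∈ f.range := by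
  refine ⟨?_, fun h => ?_⟩
  · rintro ⟨M, rfl⟩ i j
    exact ⟨M i j, rfl⟩
  · choose M hM using h
    exact ⟨of M, ext hM⟩

theorem SpecialLinearGroup.mem_range_map_iff [CommRing k] [CommRing L] {f : k →+* L}
    (hf : Function.Injective f) {g : SpecialLinearGroup n L} :
    g ∈ (SpecialLinearGroup.map f).range ↔ (g : Matrix n n L) ∈ f.mapMatrix.range := by
  refine ⟨?_, fun ⟨M, hM⟩ => ?_⟩
  · rintro ⟨M, rfl⟩
    exact ⟨M, rfl⟩
  · have hdet : M.det = 1 := hf (by rw [RingHom.map_det, hM, g.prop, map_one])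
    exact ⟨⟨M, hdet⟩, Subtype.ext hM⟩

theorem pow_card_mem_range_mapMatrix [Field k] [Field L] {f : k →+* L} {G : Matrix n n L}
    (hG : G.det = 1) {ν : L} (hν : ν ≠ 0) (hνG : ν • G ∈ f.mapMatrix.range) :
    G ^ Fintype.card n ∈ f.mapMatrix.range := by
  obtain ⟨M, hM⟩ := hνG
  have hdet : f M.det = ν ^ Fintype.card n := by
    rw [RingHom.map_det, hM, det_smul, hG, mul_one]
  have hpow : G ^ Fintype.card n = f M.det⁻¹ • (ν • G) ^ Fintype.card n := by
    rw [smul_pow, smul_smul, map_inv₀, hdet, inv_mul_cancel₀ (pow_ne_zero _ hν), one_smul]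
  rw [hpow, ← hM, ← map_pow]
  exact ⟨M.det⁻¹ • M ^ Fintype.card n, by ext; simp⟩

end RangeMap

namespace SpecialLinearGroup

variable {n k L : Type*} [Fintype n] [DecidableEq n]

theorem map_transvection [CommRing k] [CommRing L] (f : k →+* L) {i j : n} (hij : i ≠ j)
    (b : k) :
    map f (transvection hij b) = transvection hij (f b) := by
  ext a c
  simp [transvection_coe, Matrix.one_apply, Matrix.single_apply, apply_ite f]

theorem apply_mul_inv_apply_mem_range_of_mem_normalizer [CommRing k] [CommRing L] {f : k →+* L}
    (hf : Function.Injective f) {g : SpecialLinearGroup n L}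
    (hg : g ∈ Subgroup.normalizer ((map (n := n) f).range : Set (SpecialLinearGroup n L)))
    {i j : n} (hij : i ≠ j) (a b : n) :
    (g : Matrix n n L) a i * (g⁻¹ : SpecialLinearGroup n L) j b ∈ f.range := by
  have hconj : g * transvection hij 1 * g⁻¹ ∈ (map f).range :=
    (Subgroup.mem_normalizer_iff.mp hg _).mp ⟨transvection hij 1, by rw [map_transvection, map_one]⟩
  rw [mem_range_map_iff hf, mem_range_mapMatrix_iff] at hconj
  have h1 : (1 : Matrix n n L) a b ∈ f.range :=
    (mem_range_mapMatrix_iff f).mp (one_mem _) a b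
  have hentry := sub_mem (hconj a b) h1
  rwa [coe_mul, coe_mul, transvection, mul_transvection_mul_eq_add_vecMulVec, add_apply,
    add_sub_cancel_left, vecMulVec_apply] at hentry
  rw [← coe_mul, mul_inv_cancel, coe_one]

theorem pow_card_mem_range_map_of_mem_normalizer [Nontrivial n] [Field k] [Field L] {f : k →+* L}
    {g : SpecialLinearGroup n L}
    (hg : g ∈ Subgroup.normalizer ((map (n := n) f).range : Set (SpecialLinearGroup n L))) :
    g ^ Fintype.card n ∈ (map f).range := by
  set G : Matrix n n L := ↑g
  set H : Matrix n n L := ↑(g⁻¹ : SpecialLinearGroup n L)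
  have hHG : H * G = 1 := by rw [← coe_mul, inv_mul_cancel, coe_one]
  have hmem : ∀ i j a b, G a i * H j b ∈ f.range := by
    have hoff := fun i j => apply_mul_inv_apply_mem_range_of_mem_normalizer (i := i) (j := j)
      f.injective hg
    intro i j a b
    rcases eq_or_ne i j with rfl | hij
    · obtain ⟨j', hij'⟩ := exists_ne i
      exact mul_diag_mem_of_mul_offDiag_mem hHG hoff hij'.symm a b
    · exact hoff i j hij a b
  obtain ⟨j, b, hν⟩ : ∃ j b, H j b ≠ 0 := by
    by_contra! h
    exact zero_ne_one (by rwa [show H = 0 from Matrix.ext h, zero_mul] at hHG)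
  rw [mem_range_map_iff f.injective, coe_pow]
  refine pow_card_mem_range_mapMatrix g.prop hν ((mem_range_mapMatrix_iff f).mpr fun a i => ?_)
  rw [smul_apply, smul_eq_mul, mul_comm]
  exact hmem i j a b

end SpecialLinearGroup

end Matrix

theorem stmt_4_general (k L : Type) [Field k] [Field L]
    (f : k →+* L) (n : ℕ) (hn : 2 ≤ n)
    (g : Matrix.SpecialLinearGroup (Fin n) L)
    (hg : g ∈ Subgroup.normalizer ((Matrix.SpecialLinearGroup.map (n := Fin n) f).range :
      Set (Matrix.SpecialLinearGroup (Fin n) L))) :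
    g ^ n ∈ (Matrix.SpecialLinearGroup.map (n := Fin n) f).range := by
  have : Nontrivial (Fin n) := Fin.nontrivial_iff_two_le.mpr hn
  simpa using Matrix.SpecialLinearGroup.pow_card_mem_range_map_of_mem_normalizer hg

/-- For an extension `L/k` of finite fields and `n ≥ 2`, if `g ∈ SL_n(L)` normalizes
`SL_n(k)` (embedded via `k ⊆ L`), then `g^n ∈ SL_n(k)`. -/
theorem stmt_4 (k L : Type) [Field k] [Field L] [Fintype k] [Fintype L]
    (f : k →+* L) (n : ℕ) (hn : 2 ≤ n)
    (g : Matrix.SpecialLinearGroup (Fin n) L)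
    (hg : g ∈ Subgroup.normalizer ((Matrix.SpecialLinearGroup.map (n := Fin n) f).range :
      Set (Matrix.SpecialLinearGroup (Fin n) L))) :
    g ^ n ∈ (Matrix.SpecialLinearGroup.map (n := Fin n) f).range :=
  stmt_4_general k L f n hn g hg
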